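/- Let B̃ := B ⊗_𝒪 𝒪K_1. Then: (i) the formula (b ⊗ φ)^u := b^u·(u^{-1}φ(u)) ⊗ φ, for u ∈ P, b ∈ B, φ ∈ K_1 (here u^{-1}φ(u) ∈ H acts by right multiplication via the map 𝒪H → B), defines an action of P on B̃; (ii) an element b⊗φ is P-fixed if and only if b ∈ B^{Δ_φ(P)} := {b ∈ B : b^u·(u^{-1}φ(u)) = b for all u ∈ P}; (iii) the assignment b ⊗ φ ↦ b induces, for each φ ∈ K_1, a k-module isomorphism (B⊗φ)(P) ≅ B^{Δ_φ(P)}/(Σ_{R<P} Tr_{Δ_φ(R)}^{Δ_φ(P)}(B^{Δ_φ(R)}) + 𝔭·B^{Δ_φ(P)}), where Tr_{Δ_φ(R)}^{Δ_φ(P)}(c) := Σ_u c^u·(u^{-1}φ(u)) over representatives u of cosets Ru in P, and the direct sum of these maps is an isomorphism B̃(P) ≅ N̄^{K_1}_B(P) of K_1-graded k-algebras whose identity component is B(P), where the multiplication on N̄^{K_1}_B(P) sends the classes of b ∈ B^{Δ_φ(P)} and c ∈ B^{Δ_ψ(P)} to the class of bc in the (ψ∘φ)-component. -/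

import Mathlib

open scoped Classical DirectSum

noncomputable abbrev subQuot {R M : Type*} [Ring R] [AddCommGroup M] [Module R M]
    (S T : Submodule R M) : Type _ := ↥S ⧸ T.comap S.subtype

section GroupDefs

variable {G : Type*} [Group G]

/-- `K₁ = Aut_1̄(P)`. -/
def AutOne (H P : Subgroup G) [H.Normal] : Subgroup (MulAut ↥P) where
  carrier := {φ | ∀ u : ↥P, ((φ u : G) : G ⧸ H) = ↑(u : G)}
  one_mem' := fun u => rfl
  mul_mem' := by
    intro φ ψ hφ hψ u
    rw [MulAut.mul_apply, hφ (ψ u), hψ u]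
  inv_mem' := by
    intro φ hφ u
    have h1 := hφ (φ⁻¹ u)
    rw [MulAut.apply_inv_self] at h1
    exact h1.symm

/-- for `φ ∈ Aut_1̄(P)` and `u ∈ P`, the element `u⁻¹·φ(u)` of `H`. -/
def hElt (H P : Subgroup G) [H.Normal] (φ : ↥(AutOne H P)) (u : ↥P) : ↥H :=
  ⟨(↑u : G)⁻¹ * ↑((φ : MulAut ↥P) u), QuotientGroup.eq.mp (φ.2 u).symm⟩

end GroupDefs

section BDefs

variable (𝒪 : Type*) [CommRing 𝒪]
variable {G : Type*} [Group G] (H P : Subgroup G) [H.Normal]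
variable {B : Type*} [Ring B] [Algebra 𝒪 B]

/-- the map `b ↦ b^u · (u⁻¹φ(u))` on `B` (for `φ ∈ K₁`), where `b ↦ b^g` is the `G`-action
`ρ` on `B` and `u⁻¹φ(u) ∈ H` acts by right multiplication via `ι : 𝒪H → B`. -/
noncomputable def actMapB (ρ : Gᵐᵒᵖ →* (B ≃ₐ[𝒪] B)) (ι : ↥H →* Bˣ)
    (φ : ↥(AutOne H P)) (u : ↥P) : B →ₗ[𝒪] B :=
  (LinearMap.mulRight 𝒪 ((ι (hElt H P φ u) : Bˣ) : B)).comp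
    (ρ (MulOpposite.op (↑u : G))).toLinearMap

/-- `B^{Δ_φ(Q)} = {b : b^u·(u⁻¹φ(u)) = b for all u ∈ Q}`. -/
noncomputable def bFix (ρ : Gᵐᵒᵖ →* (B ≃ₐ[𝒪] B)) (ι : ↥H →* Bˣ)
    (φ : ↥(AutOne H P)) (Q : Subgroup ↥P) : Submodule 𝒪 B where
  carrier := {b | ∀ u ∈ Q, actMapB 𝒪 H P ρ ι φ u b = b}
  add_mem' := by intro a b ha hb u hu; rw [map_add, ha u hu, hb u hu]
  zero_mem' := by intro u hu; rw [map_zero]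
  smul_mem' := by intro c b hb u hu; rw [map_smul, hb u hu]

/-- the relative trace `Tr_{Δ_φ(R)}^{Δ_φ(P)}(c) = Σ_u c^u·(u⁻¹φ(u))`, over representatives
of the right cosets `Ru` of `R` in `P`. -/
noncomputable def trB [Finite ↥P] (ρ : Gᵐᵒᵖ →* (B ≃ₐ[𝒪] B)) (ι : ↥H →* Bˣ)
    (φ : ↥(AutOne H P)) (Q : Subgroup ↥P) (c : B) : B :=
  ∑ᶠ x : Quotient (QuotientGroup.rightRel Q), actMapB 𝒪 H P ρ ι φ x.out c

/-- `Σ_{R<P} Tr_{Δ_φ(R)}^{Δ_φ(P)}(B^{Δ_φ(R)}) + 𝔭·B^{Δ_φ(P)}`. -/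
noncomputable def bDen [Finite ↥P] (𝔭 : Ideal 𝒪) (ρ : Gᵐᵒᵖ →* (B ≃ₐ[𝒪] B)) (ι : ↥H →* Bˣ)
    (φ : ↥(AutOne H P)) : Submodule 𝒪 B :=
  (⨆ Q : {Q : Subgroup ↥P // Q < ⊤},
    Submodule.span 𝒪 (trB 𝒪 H P ρ ι φ Q '' (bFix 𝒪 H P ρ ι φ Q))) ⊔
      𝔭 • bFix 𝒪 H P ρ ι φ ⊤

/-- `B^{Δ_φ(P)}/(Σ_{R<P} Tr_{Δ_φ(R)}^{Δ_φ(P)}(B^{Δ_φ(R)}) + 𝔭·B^{Δ_φ(P)})`;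
for `φ = 1` this is the Brauer quotient `B(P)` for the conjugation action of `P`. -/
noncomputable abbrev BQuot [Finite ↥P] (𝔭 : Ideal 𝒪) (ρ : Gᵐᵒᵖ →* (B ≃ₐ[𝒪] B))
    (ι : ↥H →* Bˣ) (φ : ↥(AutOne H P)) :=
  subQuot (bFix 𝒪 H P ρ ι φ ⊤) (bDen 𝒪 H P 𝔭 ρ ι φ)

/-- `B̃ := B ⊗_𝒪 𝒪K₁` is modelled as `K₁ →₀ B`, `b ⊗ φ` corresponding to `single φ b`;
this is the action `(b ⊗ φ)^u := b^u·(u⁻¹φ(u)) ⊗ φ` of `u ∈ P` on it. -/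
noncomputable def tActB (ρ : Gᵐᵒᵖ →* (B ≃ₐ[𝒪] B)) (ι : ↥H →* Bˣ) (u : ↥P) :
    (↥(AutOne H P) →₀ B) →ₗ[𝒪] (↥(AutOne H P) →₀ B) :=
  Finsupp.lsum 𝒪 fun φ : ↥(AutOne H P) =>
    (Finsupp.lsingle φ).comp (actMapB 𝒪 H P ρ ι φ u)

theorem tActB_single (ρ : Gᵐᵒᵖ →* (B ≃ₐ[𝒪] B)) (ι : ↥H →* Bˣ) (u : ↥P)
    (φ : ↥(AutOne H P)) (b : B) :
    tActB 𝒪 H P ρ ι u (Finsupp.single φ b) =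
      Finsupp.single φ (actMapB 𝒪 H P ρ ι φ u b) := by
  simp [tActB]

/-- the `Q`-fixed points `B̃^Q`. -/
noncomputable def btFixed (ρ : Gᵐᵒᵖ →* (B ≃ₐ[𝒪] B)) (ι : ↥H →* Bˣ) (Q : Subgroup ↥P) :
    Submodule 𝒪 (↥(AutOne H P) →₀ B) where
  carrier := {f | ∀ u ∈ Q, tActB 𝒪 H P ρ ι u f = f}
  add_mem' := by intro f g hf hg u hu; rw [map_add, hf u hu, hg u hu]
  zero_mem' := by intro u hu; rw [map_zero]
  smul_mem' := by intro c f hf u hu; rw [map_smul, hf u hu]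

theorem single_mem_btFixed {ρ : Gᵐᵒᵖ →* (B ≃ₐ[𝒪] B)} {ι : ↥H →* Bˣ}
    {φ : ↥(AutOne H P)} {b : B} (hb : b ∈ bFix 𝒪 H P ρ ι φ ⊤) :
    Finsupp.single φ b ∈ btFixed 𝒪 H P ρ ι ⊤ := by
  intro u _
  rw [tActB_single, hb u (Subgroup.mem_top u)]

/-- the relative trace `Tr_Q^P` on `B̃`. -/
noncomputable def btTr [Finite ↥P] (ρ : Gᵐᵒᵖ →* (B ≃ₐ[𝒪] B)) (ι : ↥H →* Bˣ)
    (Q : Subgroup ↥P) (f : ↥(AutOne H P) →₀ B) : ↥(AutOne H P) →₀ B :=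
  ∑ᶠ x : Quotient (QuotientGroup.rightRel Q), tActB 𝒪 H P ρ ι x.out f

/-- the denominator of the Brauer quotient `B̃(P)`, relativized to a submodule `N ≤ B̃`. -/
noncomputable def btDen [Finite ↥P] (𝔭 : Ideal 𝒪) (ρ : Gᵐᵒᵖ →* (B ≃ₐ[𝒪] B)) (ι : ↥H →* Bˣ)
    (N : Submodule 𝒪 (↥(AutOne H P) →₀ B)) : Submodule 𝒪 (↥(AutOne H P) →₀ B) :=
  (⨆ Q : {Q : Subgroup ↥P // Q < ⊤},
    Submodule.span 𝒪 (btTr 𝒪 H P ρ ι Q '' (N ⊓ btFixed 𝒪 H P ρ ι Q))) ⊔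
      𝔭 • (N ⊓ btFixed 𝒪 H P ρ ι ⊤)

/-- the Brauer quotient `B̃(P)`. -/
noncomputable abbrev BTBrQuot [Finite ↥P] (𝔭 : Ideal 𝒪) (ρ : Gᵐᵒᵖ →* (B ≃ₐ[𝒪] B))
    (ι : ↥H →* Bˣ) :=
  subQuot (btFixed 𝒪 H P ρ ι ⊤) (btDen 𝒪 H P 𝔭 ρ ι ⊤)

/-- `B ⊗ φ`, the `φ`-component of `B̃`. -/
noncomputable def compB (ρ : Gᵐᵒᵖ →* (B ≃ₐ[𝒪] B)) (ι : ↥H →* Bˣ) (φ : ↥(AutOne H P)) :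
    Submodule 𝒪 (↥(AutOne H P) →₀ B) :=
  Submodule.map (Finsupp.lsingle φ : B →ₗ[𝒪] (↥(AutOne H P) →₀ B)) ⊤

/-- the Brauer quotient `(B⊗φ)(P)` of the `φ`-component of `B̃`. -/
noncomputable abbrev CompBQuot [Finite ↥P] (𝔭 : Ideal 𝒪) (ρ : Gᵐᵒᵖ →* (B ≃ₐ[𝒪] B))
    (ι : ↥H →* Bˣ) (φ : ↥(AutOne H P)) :=
  subQuot (compB 𝒪 H P ρ ι φ ⊓ btFixed 𝒪 H P ρ ι ⊤)
    (btDen 𝒪 H P 𝔭 ρ ι (compB 𝒪 H P ρ ι φ))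

/-- the multiplication of `B̃`: `(b ⊗ φ)(c ⊗ ψ) := bc ⊗ ψ∘φ`. -/
noncomputable def mulBT (f g : ↥(AutOne H P) →₀ B) : ↥(AutOne H P) →₀ B :=
  f.sum fun φ b => g.sum fun ψ c => Finsupp.single (ψ * φ) (b * c)

end BDefs

section Aux

open MulOpposite Finsupp

variable {𝒪 : Type*} [CommRing 𝒪]
variable {G : Type*} [Group G] {H P : Subgroup G} [H.Normal]
variable {B : Type*} [Ring B] [Algebra 𝒪 B]
variable {ρ : Gᵐᵒᵖ →* (B ≃ₐ[𝒪] B)} {ι : ↥H →* Bˣ}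

theorem actMapB_apply (φ : ↥(AutOne H P)) (u : ↥P) (b : B) :
    actMapB 𝒪 H P ρ ι φ u b = ρ (op (↑u : G)) b * ((ι (hElt H P φ u) : Bˣ) : B) := rfl

theorem hElt_one (φ : ↥(AutOne H P)) : hElt H P φ 1 = 1 := by
  apply Subtype.ext
  simp [hElt]

theorem hElt_val (φ : ↥(AutOne H P)) (u : ↥P) :
    (hElt H P φ u : G) = (↑u : G)⁻¹ * ↑((φ : MulAut ↥P) u) := rfl

theorem actMapB_one_right (φ : ↥(AutOne H P)) (b : B) :
    actMapB 𝒪 H P ρ ι φ 1 b = b := by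
  rw [actMapB_apply, hElt_one, map_one ι, Units.val_one, mul_one]
  show ρ (op ((1 : ↥P) : G)) b = b
  simp

theorem actMapB_comp (hequiv : ∀ (h : ↥H) (g : G), ρ (MulOpposite.op g) ((ι h : Bˣ) : B) =
      ((ι ⟨g⁻¹ * ↑h * g, by simpa using ‹H.Normal›.conj_mem ↑h h.2 g⁻¹⟩ : Bˣ) : B))
    (φ : ↥(AutOne H P)) (u v : ↥P) (b : B) :
    actMapB 𝒪 H P ρ ι φ v (actMapB 𝒪 H P ρ ι φ u b) = actMapB 𝒪 H P ρ ι φ (u * v) b := by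
  rw [actMapB_apply, actMapB_apply, actMapB_apply, map_mul, hequiv (hElt H P φ u) v]
  have h1 : ρ (op ((↑(u * v) : ↥P) : G)) b = ρ (op (↑v : G)) (ρ (op (↑u : G)) b) := by
    rw [Subgroup.coe_mul, op_mul, map_mul]
    rfl
  rw [h1, mul_assoc, ← Units.val_mul, ← map_mul]
  congr 2
  congr 1
  apply Subtype.ext
  push_cast [hElt_val, Subgroup.coe_mul]
  rw [map_mul]
  push_cast
  group

end Aux
section Aux2

open MulOpposite Finsupp

variable {𝒪 : Type*} [CommRing 𝒪]
variable {G : Type*} [Group G] {H P : Subgroup G} [H.Normal]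
variable {B : Type*} [Ring B] [Algebra 𝒪 B]
variable {ρ : Gᵐᵒᵖ →* (B ≃ₐ[𝒪] B)} {ι : ↥H →* Bˣ}

theorem tActB_apply (u : ↥P) (f : ↥(AutOne H P) →₀ B) (ψ : ↥(AutOne H P)) :
    (tActB 𝒪 H P ρ ι u f) ψ = actMapB 𝒪 H P ρ ι ψ u (f ψ) := by
  induction f using Finsupp.induction_linear with
  | zero => simp
  | add f g hf hg => rw [map_add, Finsupp.add_apply, Finsupp.add_apply, hf, hg, map_add]
  | single a b =>
    rw [tActB_single]
    rcases eq_or_ne a ψ with rfl | h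
    · rw [Finsupp.single_eq_same, Finsupp.single_eq_same]
    · rw [Finsupp.single_eq_of_ne' h, Finsupp.single_eq_of_ne' h, map_zero]

theorem mem_btFixed_iff {Q : Subgroup ↥P} {f : ↥(AutOne H P) →₀ B} :
    f ∈ btFixed 𝒪 H P ρ ι Q ↔ ∀ ψ, f ψ ∈ bFix 𝒪 H P ρ ι ψ Q := by
  constructor
  · intro hf ψ u hu
    rw [← tActB_apply, hf u hu]
  · intro h u hu
    ext ψ
    rw [tActB_apply]
    exact h ψ u hu

theorem single_mem_btFixed'' {Q : Subgroup ↥P} {φ : ↥(AutOne H P)} {b : B}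
    (hb : b ∈ bFix 𝒪 H P ρ ι φ Q) : Finsupp.single φ b ∈ btFixed 𝒪 H P ρ ι Q := by
  rw [mem_btFixed_iff]
  intro ψ
  rcases eq_or_ne φ ψ with rfl | h
  · rwa [Finsupp.single_eq_same]
  · rw [Finsupp.single_eq_of_ne' h]
    exact Submodule.zero_mem _

theorem trB_zero [Finite ↥P] (φ : ↥(AutOne H P)) (Q : Subgroup ↥P) :
    trB 𝒪 H P ρ ι φ Q 0 = 0 := by
  simp [trB]

theorem btTr_apply [Finite ↥P] (Q : Subgroup ↥P) (f : ↥(AutOne H P) →₀ B)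
    (ψ : ↥(AutOne H P)) :
    (btTr 𝒪 H P ρ ι Q f) ψ = trB 𝒪 H P ρ ι ψ Q (f ψ) := by
  have : Fintype (Quotient (QuotientGroup.rightRel Q)) := Fintype.ofFinite _
  rw [btTr, trB, finsum_eq_sum_of_fintype, finsum_eq_sum_of_fintype, Finsupp.finset_sum_apply]
  exact Finset.sum_congr rfl fun x _ => tActB_apply x.out f ψ

theorem btTr_single [Finite ↥P] (Q : Subgroup ↥P) (φ : ↥(AutOne H P)) (b : B) :
    btTr 𝒪 H P ρ ι Q (Finsupp.single φ b) = Finsupp.single φ (trB 𝒪 H P ρ ι φ Q b) := by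
  ext ψ
  rw [btTr_apply]
  rcases eq_or_ne φ ψ with rfl | h
  · rw [Finsupp.single_eq_same, Finsupp.single_eq_same]
  · rw [Finsupp.single_eq_of_ne' h, Finsupp.single_eq_of_ne' h, trB_zero]

end Aux2
section Aux3

open MulOpposite Finsupp

variable {𝒪 : Type*} [CommRing 𝒪]
variable {G : Type*} [Group G] {H P : Subgroup G} [H.Normal]
variable {B : Type*} [Ring B] [Algebra 𝒪 B]
variable {ρ : Gᵐᵒᵖ →* (B ≃ₐ[𝒪] B)} {ι : ↥H →* Bˣ}

theorem map_lapply_btFixed_le [Finite ↥P] (Q : Subgroup ↥P) (φ : ↥(AutOne H P)) :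
    Submodule.map (Finsupp.lapply φ : (↥(AutOne H P) →₀ B) →ₗ[𝒪] B)
      (btFixed 𝒪 H P ρ ι Q) ≤ bFix 𝒪 H P ρ ι φ Q := by
  rintro _ ⟨f, hf, rfl⟩
  exact mem_btFixed_iff.mp hf φ

theorem btDen_le_comap [Finite ↥P] (𝔭 : Ideal 𝒪) (N : Submodule 𝒪 (↥(AutOne H P) →₀ B))
    (φ : ↥(AutOne H P)) :
    btDen 𝒪 H P 𝔭 ρ ι N ≤
      Submodule.comap (Finsupp.lapply φ : (↥(AutOne H P) →₀ B) →ₗ[𝒪] B)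
        (bDen 𝒪 H P 𝔭 ρ ι φ) := by
  apply sup_le
  · apply iSup_le
    intro Q
    rw [Submodule.span_le]
    rintro _ ⟨f, hf, rfl⟩
    show (btTr 𝒪 H P ρ ι Q f) φ ∈ bDen 𝒪 H P 𝔭 ρ ι φ
    rw [btTr_apply]
    apply Submodule.mem_sup_left
    apply Submodule.mem_iSup_of_mem Q
    exact Submodule.subset_span ⟨f φ, mem_btFixed_iff.mp hf.2 φ, rfl⟩
  · rw [← Submodule.map_le_iff_le_comap, Submodule.map_smul'']
    apply le_sup_of_le_right
    apply Submodule.smul_mono le_rfl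
    exact le_trans (Submodule.map_mono inf_le_right) (map_lapply_btFixed_le ⊤ φ)

theorem map_lsingle_bDen_le [Finite ↥P] (𝔭 : Ideal 𝒪) (N : Submodule 𝒪 (↥(AutOne H P) →₀ B))
    (φ : ↥(AutOne H P)) (hN : ∀ c : B, Finsupp.single φ c ∈ N) :
    Submodule.map (Finsupp.lsingle φ : B →ₗ[𝒪] (↥(AutOne H P) →₀ B)) (bDen 𝒪 H P 𝔭 ρ ι φ)
      ≤ btDen 𝒪 H P 𝔭 ρ ι N := by
  rw [bDen, Submodule.map_sup]
  apply sup_le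
  · rw [Submodule.map_iSup]
    apply iSup_le
    intro Q
    rw [Submodule.map_span, Submodule.span_le]
    rintro _ ⟨_, ⟨b, hb, rfl⟩, rfl⟩
    apply Submodule.mem_sup_left
    apply Submodule.mem_iSup_of_mem Q
    apply Submodule.subset_span
    refine ⟨Finsupp.single φ b, ⟨hN b, single_mem_btFixed'' hb⟩, ?_⟩
    rw [btTr_single]
    rfl
  · rw [Submodule.map_smul'']
    apply le_sup_of_le_right
    apply Submodule.smul_mono le_rfl
    rintro _ ⟨b, hb, rfl⟩
    exact ⟨hN b, single_mem_btFixed'' hb⟩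

end Aux3
section Aux4
set_option synthInstance.maxHeartbeats 1000000
set_option maxHeartbeats 1000000

open MulOpposite Finsupp

variable {𝒪 : Type*} [CommRing 𝒪]
variable {G : Type*} [Group G] {H P : Subgroup G} [H.Normal]
variable {B : Type*} [Ring B] [Algebra 𝒪 B]
variable (ρ : Gᵐᵒᵖ →* (B ≃ₐ[𝒪] B)) (ι : ↥H →* Bˣ)

noncomputable def compToB (φ : ↥(AutOne H P)) :
    ↥(compB 𝒪 H P ρ ι φ ⊓ btFixed 𝒪 H P ρ ι ⊤) →ₗ[𝒪] ↥(bFix 𝒪 H P ρ ι φ ⊤) :=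
  LinearMap.codRestrict _ ((Finsupp.lapply φ).comp (Submodule.subtype _))
    (fun x => mem_btFixed_iff.mp x.2.2 φ)

noncomputable def bToComp (φ : ↥(AutOne H P)) :
    ↥(bFix 𝒪 H P ρ ι φ ⊤) →ₗ[𝒪] ↥(compB 𝒪 H P ρ ι φ ⊓ btFixed 𝒪 H P ρ ι ⊤) :=
  LinearMap.codRestrict _ ((Finsupp.lsingle φ).comp (Submodule.subtype _))
    (fun b => ⟨⟨b.1, trivial, rfl⟩, single_mem_btFixed'' b.2⟩)

noncomputable def bToBT (φ : ↥(AutOne H P)) :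
    ↥(bFix 𝒪 H P ρ ι φ ⊤) →ₗ[𝒪] ↥(btFixed 𝒪 H P ρ ι ⊤) :=
  LinearMap.codRestrict _ ((Finsupp.lsingle φ).comp (Submodule.subtype _))
    (fun b => single_mem_btFixed'' b.2)

noncomputable def btToB (φ : ↥(AutOne H P)) :
    ↥(btFixed 𝒪 H P ρ ι ⊤) →ₗ[𝒪] ↥(bFix 𝒪 H P ρ ι φ ⊤) :=
  LinearMap.codRestrict _ ((Finsupp.lapply φ).comp (Submodule.subtype _))
    (fun x => mem_btFixed_iff.mp x.2 φ)

variable [Finite ↥P] (𝔭 : Ideal 𝒪)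

noncomputable def fwdQ (φ : ↥(AutOne H P)) :
    CompBQuot 𝒪 H P 𝔭 ρ ι φ →ₗ[𝒪] BQuot 𝒪 H P 𝔭 ρ ι φ :=
  Submodule.liftQ _ ((Submodule.mkQ _).comp (compToB ρ ι φ)) (by
    intro x hx
    rw [LinearMap.mem_ker, LinearMap.comp_apply, Submodule.mkQ_apply,
      Submodule.Quotient.mk_eq_zero]
    exact btDen_le_comap 𝔭 _ φ hx)

noncomputable def bwdQ (φ : ↥(AutOne H P)) :
    BQuot 𝒪 H P 𝔭 ρ ι φ →ₗ[𝒪] CompBQuot 𝒪 H P 𝔭 ρ ι φ :=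
  Submodule.liftQ _ ((Submodule.mkQ _).comp (bToComp ρ ι φ)) (by
    intro b hb
    rw [LinearMap.mem_ker, LinearMap.comp_apply, Submodule.mkQ_apply,
      Submodule.Quotient.mk_eq_zero]
    exact map_lsingle_bDen_le 𝔭 _ φ (fun c => Submodule.mem_map_of_mem (f := (Finsupp.lsingle φ : B →ₗ[𝒪] (↥(AutOne H P) →₀ B))) (p := ⊤) trivial) ⟨b.1, hb, rfl⟩)

theorem fwd_bwd (φ : ↥(AutOne H P)) :
    (fwdQ ρ ι 𝔭 φ).comp (bwdQ ρ ι 𝔭 φ) = LinearMap.id := by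
  apply Submodule.linearMap_qext
  apply LinearMap.ext
  intro x
  show fwdQ ρ ι 𝔭 φ (bwdQ ρ ι 𝔭 φ (Submodule.Quotient.mk x)) = Submodule.Quotient.mk x
  rw [bwdQ, Submodule.liftQ_apply, LinearMap.comp_apply, Submodule.mkQ_apply,
    fwdQ, Submodule.liftQ_apply, LinearMap.comp_apply, Submodule.mkQ_apply]
  congr 1
  apply Subtype.ext
  exact Finsupp.single_eq_same

theorem bwd_fwd (φ : ↥(AutOne H P)) :
    (bwdQ ρ ι 𝔭 φ).comp (fwdQ ρ ι 𝔭 φ) = LinearMap.id := by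
  apply Submodule.linearMap_qext
  apply LinearMap.ext
  intro x
  show bwdQ ρ ι 𝔭 φ (fwdQ ρ ι 𝔭 φ (Submodule.Quotient.mk x)) = Submodule.Quotient.mk x
  rw [fwdQ, Submodule.liftQ_apply, LinearMap.comp_apply, Submodule.mkQ_apply,
    bwdQ, Submodule.liftQ_apply, LinearMap.comp_apply, Submodule.mkQ_apply]
  congr 1
  apply Subtype.ext
  obtain ⟨b, -, hb⟩ := x.2.1
  show Finsupp.single φ ((x : ↥(AutOne H P) →₀ B) φ) = (x : ↥(AutOne H P) →₀ B)
  rw [← hb]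
  show Finsupp.single φ ((Finsupp.single φ b) φ) = _
  rw [Finsupp.single_eq_same]
  rfl

end Aux4
section Aux5
set_option synthInstance.maxHeartbeats 1000000
set_option maxHeartbeats 1000000

open MulOpposite Finsupp

variable {𝒪 : Type*} [CommRing 𝒪]
variable {G : Type*} [Group G] {H P : Subgroup G} [H.Normal]
variable {B : Type*} [Ring B] [Algebra 𝒪 B]
variable (ρ : Gᵐᵒᵖ →* (B ≃ₐ[𝒪] B)) (ι : ↥H →* Bˣ)
variable [Finite ↥P] (𝔭 : Ideal 𝒪)

noncomputable def psiComp (φ : ↥(AutOne H P)) :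
    BQuot 𝒪 H P 𝔭 ρ ι φ →ₗ[𝒪] BTBrQuot 𝒪 H P 𝔭 ρ ι :=
  Submodule.liftQ _ ((Submodule.mkQ _).comp (bToBT ρ ι φ)) (by
    intro b hb
    rw [LinearMap.mem_ker, LinearMap.comp_apply, Submodule.mkQ_apply,
      Submodule.Quotient.mk_eq_zero]
    exact map_lsingle_bDen_le 𝔭 ⊤ φ (fun c => trivial) ⟨b.1, hb, rfl⟩)

noncomputable def PsiMap : (⨁ φ : ↥(AutOne H P), BQuot 𝒪 H P 𝔭 ρ ι φ) →ₗ[𝒪]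
    BTBrQuot 𝒪 H P 𝔭 ρ ι :=
  DirectSum.toModule 𝒪 _ _ (psiComp ρ ι 𝔭)

noncomputable def piQ (ψ : ↥(AutOne H P)) :
    BTBrQuot 𝒪 H P 𝔭 ρ ι →ₗ[𝒪] BQuot 𝒪 H P 𝔭 ρ ι ψ :=
  Submodule.liftQ _ ((Submodule.mkQ _).comp (btToB ρ ι ψ)) (by
    intro x hx
    rw [LinearMap.mem_ker, LinearMap.comp_apply, Submodule.mkQ_apply,
      Submodule.Quotient.mk_eq_zero]
    exact btDen_le_comap 𝔭 _ ψ hx)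

theorem psi_lof_mk (φ : ↥(AutOne H P)) (b : ↥(bFix 𝒪 H P ρ ι φ ⊤)) :
    PsiMap ρ ι 𝔭 (DirectSum.lof 𝒪 _ _ φ (Submodule.Quotient.mk b)) =
      Submodule.Quotient.mk (⟨Finsupp.single φ b.1, single_mem_btFixed'' b.2⟩ :
        ↥(btFixed 𝒪 H P ρ ι ⊤)) := by
  rw [PsiMap, DirectSum.toModule_lof, psiComp, Submodule.liftQ_apply]
  rfl

theorem piQ_psi (ψ : ↥(AutOne H P)) :
    (piQ ρ ι 𝔭 ψ).comp (PsiMap ρ ι 𝔭) = DirectSum.component 𝒪 _ _ ψ := by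
  refine DirectSum.linearMap_ext 𝒪 fun φ => ?_
  apply Submodule.linearMap_qext
  apply LinearMap.ext
  intro b
  show piQ ρ ι 𝔭 ψ (PsiMap ρ ι 𝔭 (DirectSum.lof 𝒪 _ _ φ (Submodule.Quotient.mk b))) =
    DirectSum.component 𝒪 _ _ ψ (DirectSum.lof 𝒪 _ _ φ (Submodule.Quotient.mk b))
  rw [psi_lof_mk, piQ, Submodule.liftQ_apply]
  rcases eq_or_ne φ ψ with rfl | h
  · rw [DirectSum.component.lof_self]
    show Submodule.Quotient.mk _ = _
    congr 1
    exact Subtype.ext Finsupp.single_eq_same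
  · rw [DirectSum.component.of, dif_neg h]
    show Submodule.Quotient.mk _ = _
    have h0 : (btToB ρ ι ψ) (⟨Finsupp.single φ b.1, single_mem_btFixed'' b.2⟩ :
        ↥(btFixed 𝒪 H P ρ ι ⊤)) = 0 := Subtype.ext (Finsupp.single_eq_of_ne' h)
    rw [h0, Submodule.Quotient.mk_zero]

theorem psi_bijective : Function.Bijective (PsiMap ρ ι 𝔭 (H := H) (P := P)) := by
  constructor
  · intro x y hxy
    refine DirectSum.ext_component (R := 𝒪) fun ψ => ?_
    have := congrArg (piQ ρ ι 𝔭 ψ) hxy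
    calc DirectSum.component 𝒪 _ _ ψ x
        = (piQ ρ ι 𝔭 ψ).comp (PsiMap ρ ι 𝔭) x := by rw [piQ_psi]
      _ = (piQ ρ ι 𝔭 ψ).comp (PsiMap ρ ι 𝔭) y := this
      _ = DirectSum.component 𝒪 _ _ ψ y := by rw [piQ_psi]
  · intro y
    obtain ⟨f, rfl⟩ := Submodule.Quotient.mk_surjective _ y
    refine ⟨∑ φ ∈ (f : ↥(AutOne H P) →₀ B).support,
      DirectSum.lof 𝒪 _ _ φ (Submodule.Quotient.mk
        (⟨(f : ↥(AutOne H P) →₀ B) φ, mem_btFixed_iff.mp f.2 φ⟩ :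
          ↥(bFix 𝒪 H P ρ ι φ ⊤))), ?_⟩
    rw [map_sum]
    have : ∀ φ ∈ (f : ↥(AutOne H P) →₀ B).support,
        PsiMap ρ ι 𝔭 (DirectSum.lof 𝒪 _ _ φ (Submodule.Quotient.mk
          (⟨(f : ↥(AutOne H P) →₀ B) φ, mem_btFixed_iff.mp f.2 φ⟩ :
            ↥(bFix 𝒪 H P ρ ι φ ⊤)))) =
          Submodule.Quotient.mk (⟨Finsupp.single φ ((f : ↥(AutOne H P) →₀ B) φ),
            single_mem_btFixed'' (mem_btFixed_iff.mp f.2 φ)⟩ :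
              ↥(btFixed 𝒪 H P ρ ι ⊤)) := fun φ _ => psi_lof_mk ρ ι 𝔭 φ _
    rw [Finset.sum_congr rfl this]
    simp only [← Submodule.mkQ_apply]
    rw [← map_sum]
    congr 1
    apply Subtype.ext
    push_cast
    exact Finsupp.sum_single (f : ↥(AutOne H P) →₀ B)

end Aux5


set_option synthInstance.maxHeartbeats 1000000 in
set_option maxHeartbeats 1000000 in
/-- Let `B` be an `H`-interior `G`-algebra (with `G`-action `ρ` and
structural map `ι : 𝒪H → B`, so that `h ∈ H` acts by conjugation: hypotheses `hequiv` and
`hinner`), `K₁ := Aut_1̄(P)` and `B̃ := B ⊗_𝒪 𝒪K₁` (modelled as `K₁ →₀ B`).  Then: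
(i) `(b ⊗ φ)^u := b^u·(u⁻¹φ(u)) ⊗ φ` defines an action of `P` on `B̃`;
(ii) `b ⊗ φ` is `P`-fixed iff `b ∈ B^{Δ_φ(P)} = {b : b^u·(u⁻¹φ(u)) = b for all u}`;
(iii) `b ⊗ φ ↦ b` induces, for each `φ ∈ K₁`, a `k`-module isomorphism
`(B⊗φ)(P) ≅ B^{Δ_φ(P)}/(Σ_{R<P} Tr_{Δ_φ(R)}^{Δ_φ(P)}(B^{Δ_φ(R)}) + 𝔭·B^{Δ_φ(P)})`, and the
direct sum of these maps is an isomorphism `B̃(P) ≅ N̄_B^{K₁}(P)` of `K₁`-graded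
`k`-algebras whose identity component is `B(P)` (for `φ = 1` the twisted action is the plain
conjugation action, last conjunct), the multiplication of `N̄_B^{K₁}(P)` sending the classes
of `b ∈ B^{Δ_φ(P)}` and `c ∈ B^{Δ_ψ(P)}` to the class of `bc` in the `ψ∘φ`-component
(penultimate conjunct: `B^{Δ_φ(P)}·B^{Δ_ψ(P)} ⊆ B^{Δ_{ψ∘φ}(P)}`, the multiplication being
induced by `(b⊗φ)(c⊗ψ) = bc⊗ψ∘φ` on `B̃`, which on the `P`-fixed elements corresponds to
the stated rule on singles). -/
theorem stmt11
    (𝒪 : Type*) [CommRing 𝒪] [IsDomain 𝒪] [IsDiscreteValuationRing 𝒪]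
    [IsAdicComplete (IsLocalRing.maximalIdeal 𝒪) 𝒪]
    (p : ℕ) [Fact p.Prime] [CharP (IsLocalRing.ResidueField 𝒪) p]
    (G : Type*) [Group G] [Finite G] (H P : Subgroup G) [H.Normal] (hP : IsPGroup p ↥P)
    (B : Type*) [Ring B] [Algebra 𝒪 B]
    (ρ : Gᵐᵒᵖ →* (B ≃ₐ[𝒪] B)) (ι : ↥H →* Bˣ)
    -- `ι` is `G`-equivariant:
    (hequiv : ∀ (h : ↥H) (g : G), ρ (MulOpposite.op g) ((ι h : Bˣ) : B) =
      ((ι ⟨g⁻¹ * ↑h * g, by simpa using ‹H.Normal›.conj_mem ↑h h.2 g⁻¹⟩ : Bˣ) : B))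
    -- elements of `H` act by conjugation:
    (hinner : ∀ (h : ↥H) (b : B), ρ (MulOpposite.op (↑h : G)) b =
      (((ι h)⁻¹ : Bˣ) : B) * b * ((ι h : Bˣ) : B)) :
    -- (i) the formula defines an action of `P` on `B̃`:
    (tActB 𝒪 H P ρ ι (1 : ↥P) = LinearMap.id) ∧
    (∀ u v : ↥P, (tActB 𝒪 H P ρ ι v).comp (tActB 𝒪 H P ρ ι u) = tActB 𝒪 H P ρ ι (u * v)) ∧
    -- (ii) `b ⊗ φ` is `P`-fixed iff `b ∈ B^{Δ_φ(P)}`: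
    (∀ (φ : ↥(AutOne H P)) (b : B),
      (∀ u : ↥P, tActB 𝒪 H P ρ ι u (Finsupp.single φ b) = Finsupp.single φ b) ↔
        b ∈ bFix 𝒪 H P ρ ι φ ⊤) ∧
    -- (iii) the componentwise isomorphisms `(B⊗φ)(P) ≅ B^{Δ_φ(P)}/(…)`:
    (∀ φ : ↥(AutOne H P),
      ∃ e : CompBQuot 𝒪 H P (IsLocalRing.maximalIdeal 𝒪) ρ ι φ ≃ₗ[𝒪]
            BQuot 𝒪 H P (IsLocalRing.maximalIdeal 𝒪) ρ ι φ,
        ∀ (b : B) (hb : b ∈ bFix 𝒪 H P ρ ι φ ⊤),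
          e (Submodule.Quotient.mk ⟨Finsupp.single φ b,
              ⟨Submodule.mem_map_of_mem trivial, single_mem_btFixed 𝒪 H P hb⟩⟩) =
            Submodule.Quotient.mk ⟨b, hb⟩) ∧
    -- ... whose direct sum is an isomorphism `B̃(P) ≅ N̄_B^{K₁}(P)` of `K₁`-graded
    -- `k`-algebras (determined on classes of homogeneous elements):
    (∃ E : BTBrQuot 𝒪 H P (IsLocalRing.maximalIdeal 𝒪) ρ ι ≃ₗ[𝒪]
        ⨁ φ : ↥(AutOne H P), BQuot 𝒪 H P (IsLocalRing.maximalIdeal 𝒪) ρ ι φ,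
      ∀ (φ : ↥(AutOne H P)) (b : B) (hb : b ∈ bFix 𝒪 H P ρ ι φ ⊤),
        E (Submodule.Quotient.mk ⟨Finsupp.single φ b, single_mem_btFixed 𝒪 H P hb⟩) =
          DirectSum.of _ φ (Submodule.Quotient.mk ⟨b, hb⟩)) ∧
    -- the multiplication is the one induced by `(b⊗φ)(c⊗ψ) = bc ⊗ ψ∘φ`:
    (∀ (φ ψ : ↥(AutOne H P)) (b c : B),
      mulBT H P (Finsupp.single φ b) (Finsupp.single ψ c) =
        Finsupp.single (ψ * φ) (b * c)) ∧
    (∀ (φ ψ : ↥(AutOne H P)) (b c : B), b ∈ bFix 𝒪 H P ρ ι φ ⊤ →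
      c ∈ bFix 𝒪 H P ρ ι ψ ⊤ → b * c ∈ bFix 𝒪 H P ρ ι (ψ * φ) ⊤) ∧
    -- the identity component of `B̃(P)` is `B(P)`: for `φ = 1` the twisted action is the
    -- conjugation action of `P` on `B`:
    (∀ (u : ↥P) (b : B),
      actMapB 𝒪 H P ρ ι (1 : ↥(AutOne H P)) u b = ρ (MulOpposite.op (↑u : G)) b) := by
  refine ⟨?_, ?_, ?_, ?_, ?_, ?_, ?_, ?_⟩
  · -- (i) identity
    apply Finsupp.lhom_ext'
    intro φ
    apply LinearMap.ext
    intro b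
    show tActB 𝒪 H P ρ ι 1 (Finsupp.single φ b) = Finsupp.single φ b
    rw [tActB_single, actMapB_one_right]
  · -- (i) compatibility
    intro u v
    apply Finsupp.lhom_ext'
    intro φ
    apply LinearMap.ext
    intro b
    show tActB 𝒪 H P ρ ι v (tActB 𝒪 H P ρ ι u (Finsupp.single φ b)) =
      tActB 𝒪 H P ρ ι (u * v) (Finsupp.single φ b)
    rw [tActB_single, tActB_single, tActB_single, actMapB_comp hequiv]
  · -- (ii)
    intro φ b
    constructor
    · intro h u _
      have := h u
      rw [tActB_single] at this
      exact Finsupp.single_injective φ this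
    · intro hb u
      rw [tActB_single, hb u (Subgroup.mem_top u)]
  · -- (iii) componentwise
    intro φ
    refine ⟨LinearEquiv.ofLinear (fwdQ ρ ι (IsLocalRing.maximalIdeal 𝒪) φ)
      (bwdQ ρ ι (IsLocalRing.maximalIdeal 𝒪) φ)
      (fwd_bwd ρ ι (IsLocalRing.maximalIdeal 𝒪) φ)
      (bwd_fwd ρ ι (IsLocalRing.maximalIdeal 𝒪) φ), ?_⟩
    intro b hb
    show fwdQ ρ ι (IsLocalRing.maximalIdeal 𝒪) φ (Submodule.Quotient.mk _) = _
    rw [fwdQ, Submodule.liftQ_apply]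
    show Submodule.Quotient.mk _ = _
    congr 1
    exact Subtype.ext Finsupp.single_eq_same
  · -- (iii) direct sum
    refine ⟨(LinearEquiv.ofBijective (PsiMap ρ ι (IsLocalRing.maximalIdeal 𝒪))
      (psi_bijective ρ ι (IsLocalRing.maximalIdeal 𝒪))).symm, ?_⟩
    intro φ b hb
    rw [LinearEquiv.symm_apply_eq, LinearEquiv.ofBijective_apply,
      ← DirectSum.lof_eq_of 𝒪, psi_lof_mk]
  · -- multiplication on singles
    intro φ ψ b c
    rw [mulBT, Finsupp.sum_single_index, Finsupp.sum_single_index]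
    · rw [mul_zero, Finsupp.single_zero]
    · rw [Finsupp.sum_single_index, zero_mul, Finsupp.single_zero]
      rw [mul_zero, Finsupp.single_zero]
  · -- multiplicativity of fixed points
    intro φ ψ b c hb hc u _
    have hu := hb u (Subgroup.mem_top u)
    have hv := hc ((φ : MulAut ↥P) u) (Subgroup.mem_top _)
    rw [actMapB_apply] at hu hv ⊢
    rw [map_mul]
    set r := ρ (MulOpposite.op (↑u : G))
    set h₁ := ι (hElt H P φ u) with hh₁
    set h₂ := ι (hElt H P ψ ((φ : MulAut ↥P) u)) with hh₂
    have hcoe : ((((φ : MulAut ↥P)) u : ↥P) : G) = (↑u : G) * (hElt H P φ u : G) := by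
      rw [hElt_val]; group
    have h2 : ρ (MulOpposite.op ((((φ : MulAut ↥P)) u : ↥P) : G)) c =
        ((h₁⁻¹ : Bˣ) : B) * r c * ((h₁ : Bˣ) : B) := by
      rw [hcoe, MulOpposite.op_mul, map_mul]
      show ρ (MulOpposite.op (hElt H P φ u : G)) (r c) = _
      exact hinner _ _
    rw [h2] at hv
    have h3 : (hElt H P φ u) * (hElt H P ψ ((φ : MulAut ↥P) u)) = hElt H P (ψ * φ) u := by
      apply Subtype.ext
      push_cast [hElt_val]
      rw [MulAut.mul_apply]
      group
    have hv' : ((h₁ : Bˣ) : B) * c =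
        ((h₁ : Bˣ) : B) * (((h₁⁻¹ : Bˣ) : B) * r c * ((h₁ : Bˣ) : B) * ((h₂ : Bˣ) : B)) := by
      rw [hv]
    rw [← h3, map_mul, Units.val_mul]
    simp only [← mul_assoc] at hv' ⊢
    rw [Units.mul_inv, one_mul] at hv'
    calc r b * r c * ((h₁ : Bˣ) : B) * ((h₂ : Bˣ) : B)
        = r b * (r c * ((h₁ : Bˣ) : B) * ((h₂ : Bˣ) : B)) := by
          simp only [mul_assoc]
      _ = r b * (((h₁ : Bˣ) : B) * c) := by rw [← hv']
      _ = b * c := by rw [← mul_assoc, hu]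
  · -- φ = 1: plain conjugation
    intro u b
    rw [actMapB_apply]
    have h1 : hElt H P (1 : ↥(AutOne H P)) u = 1 := by
      apply Subtype.ext
      simp [hElt_val]
    rw [h1, map_one, Units.val_one, mul_one]
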